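/- Suppose q ≤ 1/5, σ ≥ 4, and α > 1 satisfies α ≤ (1/2)σ²L − 2 ln σ and α ≤ ((1/2)σ²L² − ln 5 − 2 ln σ)/(L + ln(qα) + 1/(2σ²)), where L = ln(1 + 1/(q(α−1))). Then with z₀ = 1/2 + σ²L and μ0, μ1 the densities of N(0,σ²), N(1,σ²): ∫_{z₀}^∞ μ0(z)·((1−q) + q μ1(z)/μ0(z))^α dz ≤ 0.9·q²α(α−1)/σ². -/

import Mathlib

/-!
Beyond `z₀` the likelihood ratio `r = μ1 / μ0 = exp ((2z - 1) / (2σ²))` is at least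
`exp L = 1 + 1 / (q (α - 1))`, which gives `(1 - q) + q r ≤ q α r`. Hence the integrand is at most
`(qα)^α μ0 r^α = (qα)^α exp ((α² - α) / (2σ²)) μα`, and the Gaussian tail bound
`∫_{z₀}^∞ μα ≤ exp (-(z₀ - α)² / (2σ²)) / 2` (valid since `z₀ ≥ α`) reduces the claim to an
inequality between logarithms. That inequality follows from the second constraint on `α` when
`qα · q(α - 1) ≥ 1/9`, and from the first one otherwise.
-/

open Real MeasureTheory

noncomputable def gaussPdf (σ m x : ℝ) : ℝ :=
  (1 / (σ * Real.sqrt (2 * Real.pi))) * Real.exp (-(x - m) ^ 2 / (2 * σ ^ 2))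

variable {σ q α L : ℝ}

lemma gaussPdf_pos (hσ : 0 < σ) (m x : ℝ) : 0 < gaussPdf σ m x := by
  unfold gaussPdf
  positivity

lemma integrable_gaussPdf (hσ : 0 < σ) (m : ℝ) : Integrable (gaussPdf σ m) := by
  have h := ((integrable_exp_neg_mul_sq (b := 1 / (2 * σ ^ 2)) (by positivity)).comp_sub_right
    m).const_mul (1 / (σ * √(2 * π)))
  refine h.congr (.of_forall fun x => ?_)
  simp only [gaussPdf]
  ring_nf

lemma gaussPdf_div_gaussPdf_zero (hσ : 0 < σ) (m z : ℝ) :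
    gaussPdf σ m z / gaussPdf σ 0 z = exp ((2 * m * z - m ^ 2) / (2 * σ ^ 2)) := by
  rw [div_eq_iff (gaussPdf_pos hσ 0 z).ne', gaussPdf, gaussPdf, mul_left_comm, ← exp_add]
  ring_nf

lemma setIntegral_gaussPdf_Ioi (hσ : 0 < σ) (m : ℝ) :
    ∫ z in Set.Ioi m, gaussPdf σ m z = 1 / 2 := by
  have hshift := (measurePreserving_add_right volume m).setIntegral_preimage_emb
    (MeasurableEquiv.addRight m).measurableEmbedding (gaussPdf σ m) (Set.Ioi m)
  have hpre : (· + m) ⁻¹' Set.Ioi m = Set.Ioi 0 := by ext; simp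
  have hcentred (x : ℝ) : gaussPdf σ m (x + m) =
      1 / (σ * √(2 * π)) * exp (-(1 / (2 * σ ^ 2)) * x ^ 2) := by
    simp only [gaussPdf]; ring_nf
  have hsqrt : √(π / (1 / (2 * σ ^ 2))) = σ * √(2 * π) := by
    rw [show π / (1 / (2 * σ ^ 2)) = σ ^ 2 * (2 * π) by field_simp, sqrt_mul (by positivity),
      sqrt_sq hσ.le]
  rw [← hshift, hpre, setIntegral_congr_fun measurableSet_Ioi fun x _ => hcentred x,
    integral_const_mul, integral_gaussian_Ioi, hsqrt]
  field_simp

lemma gaussPdf_le_exp_mul_gaussPdf (hσ : 0 < σ) {m a z : ℝ} (hma : m ≤ a) (haz : a ≤ z) :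
    gaussPdf σ m z ≤ exp (-(a - m) ^ 2 / (2 * σ ^ 2)) * gaussPdf σ a z := by
  rw [gaussPdf, gaussPdf, mul_left_comm, ← exp_add]
  gcongr
  rw [← add_div]
  gcongr
  -- `(z - m)² = (a - m)² + (z - a)² + 2 (a - m) (z - a)`
  nlinarith [mul_nonneg (sub_nonneg.2 hma) (sub_nonneg.2 haz)]

lemma setIntegral_gaussPdf_Ioi_le (hσ : 0 < σ) {m a : ℝ} (hma : m ≤ a) :
    ∫ z in Set.Ioi a, gaussPdf σ m z ≤ 1 / 2 * exp (-(a - m) ^ 2 / (2 * σ ^ 2)) := by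
  calc ∫ z in Set.Ioi a, gaussPdf σ m z
      ≤ ∫ z in Set.Ioi a, exp (-(a - m) ^ 2 / (2 * σ ^ 2)) * gaussPdf σ a z := by
        refine setIntegral_mono_on ((integrable_gaussPdf hσ m).integrableOn)
          (((integrable_gaussPdf hσ a).const_mul _).integrableOn) measurableSet_Ioi
          fun z hz => gaussPdf_le_exp_mul_gaussPdf hσ hma (le_of_lt hz)
    _ = 1 / 2 * exp (-(a - m) ^ 2 / (2 * σ ^ 2)) := by
        rw [integral_const_mul, setIntegral_gaussPdf_Ioi hσ, mul_comm]

lemma sub_add_mul_le_mul (hq : 0 < q) (hα : 1 < α) {r : ℝ}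
    (hr : 1 + 1 / (q * (α - 1)) ≤ r) : 1 - q + q * r ≤ q * α * r := by
  have ht : 0 < q * (α - 1) := mul_pos hq (by linarith)
  have : q * (α - 1) * (1 + 1 / (q * (α - 1))) = q * (α - 1) + 1 := by
    rw [mul_add, mul_one, mul_one_div_cancel ht.ne']
  nlinarith [mul_le_mul_of_nonneg_left hr ht.le]

lemma gaussPdf_mul_mixture_rpow_le (hσ : 0 < σ) (hq : 0 < q) (hα : 1 < α)
    (hL : L = log (1 + 1 / (q * (α - 1)))) {z : ℝ} (hz : 1 / 2 + σ ^ 2 * L ≤ z) :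
    gaussPdf σ 0 z * ((1 - q) + q * (gaussPdf σ 1 z / gaussPdf σ 0 z)) ^ α ≤
      (q * α) ^ α * exp ((α ^ 2 - α) / (2 * σ ^ 2)) * gaussPdf σ α z := by
  set c := (2 * z - 1) / (2 * σ ^ 2) with hc
  have hratio : gaussPdf σ 1 z / gaussPdf σ 0 z = exp c := by
    rw [gaussPdf_div_gaussPdf_zero hσ, hc]; ring_nf
  have hshift : exp (α * c) = exp ((α ^ 2 - α) / (2 * σ ^ 2)) *
      (gaussPdf σ α z / gaussPdf σ 0 z) := by
    rw [gaussPdf_div_gaussPdf_zero hσ, ← exp_add, hc]; ring_nf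
  have hLc : L ≤ c := by
    rw [le_div_iff₀ (by positivity)]; nlinarith
  have ht : 0 ≤ 1 / (q * (α - 1)) := one_div_nonneg.2 (mul_pos hq (sub_pos.2 hα)).le
  have hr : 1 + 1 / (q * (α - 1)) ≤ exp c := by
    rw [← exp_log (by positivity : 0 < 1 + 1 / (q * (α - 1))), ← hL]
    exact exp_le_exp.2 hLc
  have hbase0 : 0 ≤ 1 - q + q * exp c := by nlinarith
  have h0 := gaussPdf_pos hσ 0 z
  calc gaussPdf σ 0 z * ((1 - q) + q * (gaussPdf σ 1 z / gaussPdf σ 0 z)) ^ α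
      ≤ gaussPdf σ 0 z * (q * α * exp c) ^ α := by
        rw [hratio]; gcongr; exact sub_add_mul_le_mul hq hα hr
    _ = (q * α) ^ α * exp ((α ^ 2 - α) / (2 * σ ^ 2)) * gaussPdf σ α z := by
        rw [mul_rpow (by positivity) (exp_pos c).le, ← exp_mul, mul_comm c, hshift]
        field_simp

noncomputable def tailExponent (σ q α L : ℝ) : ℝ :=
  α * log (q * α) + α * L - 1 / (8 * σ ^ 2) - L / 2 - σ ^ 2 * L ^ 2 / 2

lemma tailExponent_le_of_le_div (hσ : 0 < σ) (hα : 0 ≤ α) (hL : 0 ≤ L)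
    (hD : 0 < L + log (q * α) + 1 / (2 * σ ^ 2))
    (hprod : -log 9 ≤ log (q * α) + log (q * (α - 1)))
    (hα2 : α ≤ ((1 / 2) * σ ^ 2 * L ^ 2 - log 5 - 2 * log σ) /
        (L + log (q * α) + 1 / (2 * σ ^ 2))) :
    tailExponent σ q α L ≤ log 1.8 + log (q * α) + log (q * (α - 1)) - 2 * log σ := by
  have hα2' := (le_div_iff₀ hD).1 hα2
  have hlog9 : log 1.8 + log 5 = log 9 := by
    rw [← log_mul (by norm_num) (by norm_num)]; norm_num
  have : 0 ≤ α * (1 / (2 * σ ^ 2)) := by positivity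
  have : 0 ≤ 1 / (8 * σ ^ 2) := by positivity
  unfold tailExponent
  nlinarith

lemma tailExponent_le_of_le (hα : 1 ≤ α) (hX : log (q * α) ≤ 0) (hL : 1 ≤ L)
    (ht : -L ≤ log (q * (α - 1))) (hσ : 1 / 4 ≤ log σ)
    (hα1 : α ≤ (1 / 2) * σ ^ 2 * L - 2 * log σ) :
    tailExponent σ q α L ≤ log 1.8 + log (q * α) + log (q * (α - 1)) - 2 * log σ := by
  have hlog18 : 1 / 2 ≤ log 1.8 := by
    rw [le_log_iff_exp_le (by norm_num)]
    nlinarith [exp_one_lt_three, exp_pos (1 / 2), show exp (1 / 2) * exp (1 / 2) = exp 1 by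
      rw [← exp_add]; norm_num]
  have : 0 ≤ 1 / (8 * σ ^ 2) := by positivity
  unfold tailExponent
  nlinarith [mul_le_mul_of_nonneg_right hα1 (by linarith : 0 ≤ L),
    mul_nonneg (sub_nonneg.2 hα) (neg_nonneg.2 hX),
    mul_nonneg (by linarith : (0 : ℝ) ≤ 2 * log σ - 1 / 2) (sub_nonneg.2 hL)]

lemma tailExponent_le (hq0 : 0 < q) (hq : q ≤ 1 / 5) (hσ : 4 ≤ σ) (hα : 1 < α)
    (hL : L = log (1 + 1 / (q * (α - 1))))
    (hα1 : α ≤ (1 / 2) * σ ^ 2 * L - 2 * log σ)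
    (hα2 : α ≤ ((1 / 2) * σ ^ 2 * L ^ 2 - log 5 - 2 * log σ) /
        (L + log (q * α) + 1 / (2 * σ ^ 2))) :
    tailExponent σ q α L ≤ log 1.8 + log (q * α) + log (q * (α - 1)) - 2 * log σ := by
  have ht : 0 < q * (α - 1) := mul_pos hq0 (by linarith)
  have hqα : 0 < q * α := by positivity
  have hL0 : 0 < L := hL ▸ log_pos (by simp only [lt_add_iff_pos_right]; positivity)
  by_cases hprod : 1 / 9 ≤ q * α * (q * (α - 1))
  · refine tailExponent_le_of_le_div (by linarith) (by linarith) hL0.le ?_ ?_ hα2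
    · have hmix : (1 + 1 / (q * (α - 1))) * (q * α) = q * α + α / (α - 1) := by
        field_simp
      have : 1 < α / (α - 1) := by rw [lt_div_iff₀ (by linarith)]; linarith
      have : 0 < L + log (q * α) := by
        rw [hL, ← log_mul (by positivity) hqα.ne', hmix]
        exact log_pos (by linarith)
      positivity
    · rw [← log_mul hqα.ne' ht.ne', ← log_inv]
      exact log_le_log (by norm_num) (by linarith)
  · have htα : q * (α - 1) < q * α := by nlinarith
    have ht3 : q * (α - 1) < 1 / 3 := by nlinarith
    refine tailExponent_le_of_le hα.le (log_nonpos hqα.le (by linarith)) ?_ ?_ ?_ hα1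
    · rw [hL, le_log_iff_exp_le (by positivity)]
      have : 3 < 1 / (q * (α - 1)) := by rw [lt_div_iff₀ ht]; linarith
      linarith [exp_one_lt_three]
    · rw [hL, neg_le, ← log_inv, inv_eq_one_div]
      exact log_le_log (by positivity) (by linarith)
    · have := one_sub_inv_le_log_of_pos (by linarith : 0 < σ)
      have : σ⁻¹ ≤ 1 / 4 := by rw [inv_eq_one_div]; gcongr
      linarith

lemma mul_gaussTail_eq (hσ : σ ≠ 0) (hqα : 0 < q * α) :
    (q * α) ^ α * exp ((α ^ 2 - α) / (2 * σ ^ 2)) *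
        (1 / 2 * exp (-(1 / 2 + σ ^ 2 * L - α) ^ 2 / (2 * σ ^ 2))) =
      1 / 2 * exp (tailExponent σ q α L) := by
  have hsum : tailExponent σ q α L = log (q * α) * α + (α ^ 2 - α) / (2 * σ ^ 2) +
      -(1 / 2 + σ ^ 2 * L - α) ^ 2 / (2 * σ ^ 2) := by
    rw [tailExponent]; field_simp; ring
  rw [rpow_def_of_pos hqα, hsum, exp_add, exp_add]
  ring

lemma mul_gaussTail_le (hq0 : 0 < q) (hq : q ≤ 1 / 5) (hσ : 4 ≤ σ) (hα : 1 < α)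
    (hL : L = log (1 + 1 / (q * (α - 1))))
    (hα1 : α ≤ (1 / 2) * σ ^ 2 * L - 2 * log σ)
    (hα2 : α ≤ ((1 / 2) * σ ^ 2 * L ^ 2 - log 5 - 2 * log σ) /
        (L + log (q * α) + 1 / (2 * σ ^ 2))) :
    (q * α) ^ α * exp ((α ^ 2 - α) / (2 * σ ^ 2)) *
        (1 / 2 * exp (-(1 / 2 + σ ^ 2 * L - α) ^ 2 / (2 * σ ^ 2))) ≤
      0.9 * q ^ 2 * α * (α - 1) / σ ^ 2 := by
  have hqα : 0 < q * α := by nlinarith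
  have ht : 0 < q * (α - 1) := mul_pos hq0 (by linarith)
  have hσ0 : 0 < σ := by linarith
  have hexp : exp (tailExponent σ q α L) ≤ 1.8 * (q * α) * (q * (α - 1)) / σ ^ 2 := by
    rw [← le_log_iff_exp_le (by positivity), log_div (by positivity) (by positivity),
      log_mul (by positivity) ht.ne', log_mul (by norm_num) hqα.ne', log_pow]
    push_cast
    exact tailExponent_le hq0 hq hσ hα hL hα1 hα2
  rw [mul_gaussTail_eq hσ0.ne' hqα]
  linarith [show 1 / 2 * (1.8 * (q * α) * (q * (α - 1)) / σ ^ 2) =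
    0.9 * q ^ 2 * α * (α - 1) / σ ^ 2 by ring]

theorem A_alpha_two_bound (σ q α L : ℝ) (hq0 : 0 < q) (hq : q ≤ 1 / 5) (hσ : 4 ≤ σ)
    (hα : 1 < α) (hL : L = Real.log (1 + 1 / (q * (α - 1))))
    (hα1 : α ≤ (1 / 2) * σ ^ 2 * L - 2 * Real.log σ)
    (hα2 : α ≤ ((1 / 2) * σ ^ 2 * L ^ 2 - Real.log 5 - 2 * Real.log σ) /
        (L + Real.log (q * α) + 1 / (2 * σ ^ 2))) :
    ∫ z in Set.Ioi ((1 : ℝ) / 2 + σ ^ 2 * L),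
        gaussPdf σ 0 z * ((1 - q) + q * (gaussPdf σ 1 z / gaussPdf σ 0 z)) ^ α ≤
      0.9 * q ^ 2 * α * (α - 1) / σ ^ 2 := by
  have hσ0 : 0 < σ := by linarith
  have hL0 : 0 ≤ L := hL ▸ log_nonneg (le_add_of_nonneg_right
    (one_div_nonneg.2 (mul_pos hq0 (sub_pos.2 hα)).le))
  have hαz : α ≤ 1 / 2 + σ ^ 2 * L := by
    nlinarith [log_nonneg (by linarith : 1 ≤ σ), mul_nonneg (sq_nonneg σ) hL0]
  have hintegrand (z : ℝ) :
      0 ≤ gaussPdf σ 0 z * ((1 - q) + q * (gaussPdf σ 1 z / gaussPdf σ 0 z)) ^ α := by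
    have := div_pos (gaussPdf_pos hσ0 1 z) (gaussPdf_pos hσ0 0 z)
    exact mul_nonneg (gaussPdf_pos hσ0 0 z).le (rpow_nonneg (by nlinarith) α)
  calc _ ≤ ∫ z in Set.Ioi (1 / 2 + σ ^ 2 * L),
          (q * α) ^ α * exp ((α ^ 2 - α) / (2 * σ ^ 2)) * gaussPdf σ α z :=
        integral_mono_of_nonneg (.of_forall hintegrand)
          ((integrable_gaussPdf hσ0 α).const_mul _).integrableOn
          ((ae_restrict_iff' measurableSet_Ioi).2 (.of_forall fun z hz =>
            gaussPdf_mul_mixture_rpow_le hσ0 hq0 hα hL (le_of_lt hz)))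
    _ = (q * α) ^ α * exp ((α ^ 2 - α) / (2 * σ ^ 2)) *
          ∫ z in Set.Ioi (1 / 2 + σ ^ 2 * L), gaussPdf σ α z := integral_const_mul _ _
    _ ≤ (q * α) ^ α * exp ((α ^ 2 - α) / (2 * σ ^ 2)) *
          (1 / 2 * exp (-(1 / 2 + σ ^ 2 * L - α) ^ 2 / (2 * σ ^ 2))) := by
        gcongr
        exact setIntegral_gaussPdf_Ioi_le hσ0 hαz
    _ ≤ 0.9 * q ^ 2 * α * (α - 1) / σ ^ 2 := mul_gaussTail_le hq0 hq hσ hα hL hα1 hα2
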